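/- Let X and Y be finite random variables with joint distribution P_XY, where P_X(x) > 0 for all x and P_Y(y) > 0 for all y, and let |𝒴| be the size of the alphabet of Y. Then for all δ ∈ (0,1), the PML envelope satisfies ε_c(δ) ≤ log(|𝒴|/δ). -/

import Mathlib

/-!
Post-processing `Y` by a kernel can only shrink `∑_z max_x P_{Z|X=x}(z)`, the exponential of
the maximal leakage, and for `Y` itself this sum is at most `|𝒴|` since each conditional
probability is at most `1`. An outcome `z` with `ℓ(X → z) > t` has
`P_Z(z) < e^{-t} max_x P_{Z|X=x}(z)`, so by a Markov-type bound the outcomes with leakage above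
`t = log (|𝒴| / δ)` carry mass at most `e^{-t} |𝒴| = δ`.
-/

open Real Finset
open scoped Classical

noncomputable section

/-- Marginal distribution of the first coordinate of a joint distribution. -/
def margX {X Y : Type} [Fintype Y] (P : X → Y → ℝ) (x : X) : ℝ := ∑ y, P x y

/-- Marginal distribution of the second coordinate of a joint distribution. -/
def margY {X Y : Type} [Fintype X] (P : X → Y → ℝ) (y : Y) : ℝ := ∑ x, P x y

/-- `P` is a joint probability distribution on `X × Y`. -/
def IsJoint {X Y : Type} [Fintype X] [Fintype Y] (P : X → Y → ℝ) : Prop :=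
  (∀ x y, 0 ≤ P x y) ∧ (∑ x, ∑ y, P x y) = 1

/-- Conditional probability `P_{Y|X=x}(y)` of the second coordinate given the first. -/
def condYX {X Y : Type} [Fintype Y] (P : X → Y → ℝ) (x : X) (y : Y) : ℝ :=
  P x y / margX P x

/-- Pointwise maximal leakage of the outcome `y`:
`ℓ(X → y) = log (max_x P_{Y|X=x}(y) / P_Y(y))`. -/
def pml {X Y : Type} [Fintype X] [Fintype Y] (P : X → Y → ℝ) (y : Y) : ℝ :=
  Real.log ((⨆ x, condYX P x y) / margY P y)

/-- `K` is a Markov kernel (a conditional distribution). -/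
def IsKernel {Y Z : Type} [Fintype Z] (K : Y → Z → ℝ) : Prop :=
  (∀ y z, 0 ≤ K y z) ∧ ∀ y, (∑ z, K y z) = 1

/-- Joint distribution of `(X, Z)` obtained by post-processing `Y` with the kernel `K`
(marginalizing out `Y`); this encodes the Markov chain `X - Y - Z`. -/
def pushKernel {X Y Z : Type} [Fintype Y] (P : X → Y → ℝ) (K : Y → Z → ℝ)
    (x : X) (z : Z) : ℝ :=
  ∑ y, P x y * K y z

/-- Left-continuous quantile of the leakage random variable:
`ubar ε_Z(δ) = inf {t ≥ 0 : ℙ(ℓ(Z) ≤ t) ≥ 1 - δ}`. -/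
def ubarEps {X Z : Type} [Fintype X] [Fintype Z] (Q : X → Z → ℝ) (δ : ℝ) : ℝ :=
  sInf {t : ℝ | 0 ≤ t ∧
    1 - δ ≤ ∑ z ∈ Finset.univ.filter (fun z => pml Q z ≤ t), margY Q z}

/-- The PML envelope: the supremum of the left-continuous leakage quantile over all
finite post-processings `Z` of `Y` (i.e., over all Markov chains `X - Y - Z`). -/
def pmlEnvelope {X Y : Type} [Fintype X] [Fintype Y] (P : X → Y → ℝ) (δ : ℝ) : ℝ :=
  sSup {e : ℝ | ∃ (n : ℕ) (K : Y → Fin n → ℝ),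
    IsKernel K ∧ e = ubarEps (pushKernel P K) δ}

variable {X Y Z : Type}

def expMaxLeakage [Fintype Y] (P : X → Y → ℝ) : ℝ := ∑ y, ⨆ x, condYX P x y

lemma condYX_nonneg [Fintype Y] {P : X → Y → ℝ} (hP : ∀ x y, 0 ≤ P x y) (x : X) (y : Y) :
    0 ≤ condYX P x y :=
  div_nonneg (hP x y) (sum_nonneg fun y' _ => hP x y')

lemma condYX_le_one [Fintype Y] {P : X → Y → ℝ} (hP : ∀ x y, 0 ≤ P x y) (x : X) (y : Y) :
    condYX P x y ≤ 1 :=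
  div_le_one_of_le₀ (single_le_sum (fun y' _ => hP x y') (mem_univ y))
    (sum_nonneg fun y' _ => hP x y')

lemma margX_pushKernel [Fintype Y] [Fintype Z] (P : X → Y → ℝ) {K : Y → Z → ℝ}
    (hK : IsKernel K) :
    margX (pushKernel P K) = margX P := by
  ext x
  simp only [margX, pushKernel]
  rw [sum_comm]
  simp [← mul_sum, hK.2]

lemma condYX_pushKernel [Fintype Y] [Fintype Z] (P : X → Y → ℝ) {K : Y → Z → ℝ}
    (hK : IsKernel K) (x : X) (z : Z) :
    condYX (pushKernel P K) x z = ∑ y, condYX P x y * K y z := by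
  simp only [condYX, margX_pushKernel P hK, pushKernel, sum_div, div_mul_eq_mul_div]

lemma IsJoint.pushKernel [Fintype X] [Fintype Y] [Fintype Z] {P : X → Y → ℝ} (hP : IsJoint P)
    {K : Y → Z → ℝ} (hK : IsKernel K) :
    IsJoint (pushKernel P K) := by
  refine ⟨fun x z => sum_nonneg fun y _ => mul_nonneg (hP.1 x y) (hK.1 y z), ?_⟩
  rw [← hP.2]
  exact sum_congr rfl fun x _ => congrFun (margX_pushKernel P hK) x

lemma IsJoint.sum_margY [Fintype X] [Fintype Y] {P : X → Y → ℝ} (hP : IsJoint P) :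
    ∑ y, margY P y = 1 := by
  simp only [margY]
  rw [sum_comm, hP.2]

lemma iSup_condYX_pushKernel_le [Fintype X] [Fintype Y] [Fintype Z] {P : X → Y → ℝ}
    (hP : ∀ x y, 0 ≤ P x y) {K : Y → Z → ℝ} (hK : IsKernel K) (z : Z) :
    ⨆ x, condYX (pushKernel P K) x z ≤ ∑ y, (⨆ x, condYX P x y) * K y z := by
  refine Real.iSup_le (fun x => ?_) <|
    sum_nonneg fun y _ => mul_nonneg (Real.iSup_nonneg (condYX_nonneg hP · y)) (hK.1 y z)
  rw [condYX_pushKernel P hK]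
  exact sum_le_sum fun y _ => mul_le_mul_of_nonneg_right
    (le_ciSup (f := (condYX P · y)) (Set.finite_range _).bddAbove x) (hK.1 y z)

lemma expMaxLeakage_pushKernel_le [Fintype X] [Fintype Y] [Fintype Z] {P : X → Y → ℝ}
    (hP : ∀ x y, 0 ≤ P x y) {K : Y → Z → ℝ} (hK : IsKernel K) :
    expMaxLeakage (pushKernel P K) ≤ expMaxLeakage P :=
  calc expMaxLeakage (pushKernel P K)
      ≤ ∑ z, ∑ y, (⨆ x, condYX P x y) * K y z :=
        sum_le_sum fun z _ => iSup_condYX_pushKernel_le hP hK z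
    _ = expMaxLeakage P := by
      rw [sum_comm]
      simp [expMaxLeakage, ← mul_sum, hK.2]

lemma expMaxLeakage_le_card [Fintype Y] {P : X → Y → ℝ} (hP : ∀ x y, 0 ≤ P x y) :
    expMaxLeakage P ≤ Fintype.card Y := by
  calc expMaxLeakage P ≤ ∑ _y : Y, (1 : ℝ) :=
        sum_le_sum fun y _ => Real.iSup_le (condYX_le_one hP · y) zero_le_one
    _ = Fintype.card Y := by simp

lemma exp_mul_margY_le_of_lt_pml [Fintype X] [Fintype Z] {Q : X → Z → ℝ}
    (hQ : ∀ x z, 0 ≤ Q x z) {t : ℝ} (ht : 0 ≤ t) {z : Z} (hz : t < pml Q z) :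
    exp t * margY Q z ≤ ⨆ x, condYX Q x z := by
  have hm : 0 ≤ margY Q z := sum_nonneg fun x _ => hQ x z
  have hratio : 0 < (⨆ x, condYX Q x z) / margY Q z := by
    refine (div_nonneg (Real.iSup_nonneg (condYX_nonneg hQ · z)) hm).lt_of_ne' fun h0 => ?_
    rw [pml, h0, log_zero] at hz
    exact hz.not_ge ht
  have hm_pos : 0 < margY Q z := hm.lt_of_ne' fun h0 => by simp [h0] at hratio
  exact ((lt_div_iff₀ hm_pos).mp ((lt_log_iff_exp_lt hratio).mp hz)).le

lemma exp_mul_tail_le_expMaxLeakage [Fintype X] [Fintype Z] {Q : X → Z → ℝ}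
    (hQ : ∀ x z, 0 ≤ Q x z) {t : ℝ} (ht : 0 ≤ t) :
    exp t * ∑ z ∈ univ.filter (fun z => t < pml Q z), margY Q z ≤ expMaxLeakage Q := by
  rw [mul_sum]
  calc ∑ z ∈ univ.filter (fun z => t < pml Q z), exp t * margY Q z
      ≤ ∑ z ∈ univ.filter (fun z => t < pml Q z), ⨆ x, condYX Q x z :=
        sum_le_sum fun z hz => exp_mul_margY_le_of_lt_pml hQ ht (mem_filter.mp hz).2
    _ ≤ expMaxLeakage Q :=
        sum_le_sum_of_subset_of_nonneg (filter_subset _ _)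
          fun z _ _ => Real.iSup_nonneg (condYX_nonneg hQ · z)

lemma ubarEps_le_of_tail_le [Fintype X] [Fintype Z] {Q : X → Z → ℝ} (hQ : IsJoint Q)
    {δ t : ℝ} (ht : 0 ≤ t)
    (htail : ∑ z ∈ univ.filter (fun z => t < pml Q z), margY Q z ≤ δ) :
    ubarEps Q δ ≤ t := by
  refine csInf_le ⟨0, fun _ h => h.1⟩ ⟨ht, ?_⟩
  have hsplit := sum_filter_add_sum_filter_not univ (fun z => pml Q z ≤ t) (margY Q)
  simp only [not_le] at hsplit
  linarith [hQ.sum_margY]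

theorem pmlEnvelope_le_log_card_general
    {X Y : Type} [Fintype X] [Fintype Y]
    (P : X → Y → ℝ) (hP : IsJoint P)
    (δ : ℝ) (hδ : δ ∈ Set.Ioo (0 : ℝ) 1) :
    pmlEnvelope P δ ≤ Real.log ((Fintype.card Y : ℝ) / δ) := by
  obtain ⟨hδ0, hδ1⟩ := hδ
  have : Nonempty Y := univ_nonempty_iff.mp <| nonempty_of_sum_ne_zero <| by
    rw [hP.sum_margY]; exact one_ne_zero
  have hcard : (1 : ℝ) ≤ Fintype.card Y := by exact_mod_cast Fintype.card_pos
  have ht : 0 ≤ log (Fintype.card Y / δ) :=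
    log_nonneg <| (one_le_div hδ0).mpr (hδ1.le.trans hcard)
  refine Real.sSup_le ?_ ht
  rintro _ ⟨n, K, hK, rfl⟩
  refine ubarEps_le_of_tail_le (hP.pushKernel hK) ht ?_
  have hbound := (exp_mul_tail_le_expMaxLeakage (hP.pushKernel hK).1 ht).trans
    ((expMaxLeakage_pushKernel_le hP.1 hK).trans (expMaxLeakage_le_card hP.1))
  rw [exp_log (by positivity)] at hbound
  refine le_of_mul_le_mul_left (hbound.trans_eq ?_) (by positivity)
  field_simp

/-- For all `δ ∈ (0,1)`, the PML envelope satisfies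
`ε_c(δ) ≤ log (|𝒴| / δ)`. -/
theorem pmlEnvelope_le_log_card
    {X Y : Type} [Fintype X] [Fintype Y]
    (P : X → Y → ℝ) (hP : IsJoint P)
    (hPX : ∀ x, 0 < margX P x) (hPY : ∀ y, 0 < margY P y)
    (δ : ℝ) (hδ : δ ∈ Set.Ioo (0 : ℝ) 1) :
    pmlEnvelope P δ ≤ Real.log ((Fintype.card Y : ℝ) / δ) :=
  pmlEnvelope_le_log_card_general P hP δ hδ
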